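/- arXiv:1903.04286 — 5 statements merged into one kernel-verified Lean document; each statement's English description precedes it below -/
import Mathlib

section
/- For every integer n with 4 ≤ n ≤ 6, the general position number of the Kneser graph K(n,2) equals 6. -/
namespace SimpleGraph

variable {V : Type*}

/-- `S` is a general position set of `G`: no vertex of `S` lies on a geodesic
(shortest path) between two other vertices of `S`. -/
def IsGPSet (G : SimpleGraph V) (S : Set V) : Prop :=
  ∀ ⦃u v w : V⦄, u ∈ S → v ∈ S → w ∈ S → u ≠ v → u ≠ w → v ≠ w →
    ∀ p : G.Walk u v, p.IsPath → p.length = G.dist u v → w ∉ p.support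

/-- The general position number of `G`: the maximum cardinality of a general
position set of `G`. -/
noncomputable def gpNumber (G : SimpleGraph V) : ℕ :=
  sSup {n | ∃ S : Set V, G.IsGPSet S ∧ n = S.ncard}

/-- `ρ(G)`: the maximum number of vertices in a union of pairwise independent
complete subgraphs of `G`, where complete subgraphs `Q`, `Q'` are independent
if `d_G(u,u') ≥ 2` for every `u ∈ Q` and `u' ∈ Q'`. -/
noncomputable def rho (G : SimpleGraph V) : ℕ :=
  sSup {n | ∃ 𝒬 : Finset (Finset V),
    (∀ Q ∈ 𝒬, G.IsClique (Q : Set V)) ∧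
    (∀ Q ∈ 𝒬, ∀ Q' ∈ 𝒬, Q ≠ Q' → ∀ u ∈ Q, ∀ u' ∈ Q', 2 ≤ G.edist u u') ∧
    n = (⋃ Q ∈ 𝒬, (Q : Set V)).ncard}

/-- A graph is complete multipartite iff non-adjacency is transitive. -/
def IsCompleteMultipartite' (G : SimpleGraph V) : Prop := Transitive (¬G.Adj · ·)

/-- `η(G)`: the maximum order of an induced complete multipartite subgraph of
the complement of `G`. -/
noncomputable def eta (G : SimpleGraph V) : ℕ :=
  sSup {n | ∃ B : Set V, (Gᶜ.induce B).IsCompleteMultipartite' ∧ n = B.ncard}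

/-- An independent set of a graph. -/
def IsIndepSet' (G : SimpleGraph V) (S : Set V) : Prop :=
  S.Pairwise fun u v => ¬ G.Adj u v

/-- The independence number `α(G)`. -/
noncomputable def indepNum' (G : SimpleGraph V) : ℕ :=
  sSup {n | ∃ S : Set V, G.IsIndepSet' S ∧ n = S.ncard}

end SimpleGraph

/-- The Kneser graph `K(n,k)`: vertices are the `k`-element subsets of an
`n`-element set, two vertices adjacent iff the corresponding sets are disjoint. -/
def kneserGraph (n k : ℕ) : SimpleGraph {s : Finset (Fin n) // s.card = k} where
  Adj a b := Disjoint a.1 b.1 ∧ a ≠ b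
  symm := by
    constructor
    rintro a b ⟨h1, h2⟩
    exact ⟨h1.symm, h2.symm⟩
  loopless := by
    constructor
    rintro a ⟨-, h⟩
    exact h rfl

/-!
For `n ≥ 5` any two non-adjacent vertices of `K(n,2)` have a common neighbour, so a set is in
general position exactly when it induces a disjoint union of cliques, i.e. when disjointness is
transitive on it; for `n = 4` the graph is a perfect matching and every set is in general
position. In both cases the six `2`-subsets of a `4`-set form such a set.

Conversely, let `𝒜` be a family of `2`-sets on which disjointness is transitive. If `𝒜` is
intersecting, Erdős–Ko–Rado bounds it by `n - 1`. Otherwise it has two disjoint members `A`, `B`,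
and every member lies inside `A ∪ B` or misses it. A member missing `A ∪ B` is disjoint from
every member inside `A ∪ B`, hence by transitivity so are `A` and `B`, which forces those members
to be `A` and `B`. So `𝒜` consists either of `2`-subsets of the `4`-set `A ∪ B`, or of `A`, `B`
and `2`-subsets of the `n - 4` remaining points.
-/

open Finset SimpleGraph

namespace SimpleGraph

variable {V : Type*} {G : SimpleGraph V} {S : Set V}

/-- `G[S]` is a disjoint union of cliques. -/
def IsClusterSet (G : SimpleGraph V) (S : Set V) : Prop :=
  ∀ ⦃u v w : V⦄, u ∈ S → v ∈ S → w ∈ S → u ≠ v → G.Adj u w → G.Adj w v → G.Adj u v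

theorem IsGPSet.isClusterSet (hS : G.IsGPSet S) : G.IsClusterSet S := by
  intro u v w hu hv hw huv huw hwv
  by_contra hnuv
  let p : G.Walk u v := .cons huw (.cons hwv .nil)
  have hdist : G.dist u v = 2 :=
    le_antisymm (dist_le p) (p.reachable.one_lt_dist_of_ne_of_not_adj huv hnuv)
  exact hS hu hv hw huv huw.ne hwv.ne.symm p
    (by simp [p, huw.ne, hwv.ne, huv]) hdist.symm (by simp [p])

theorem isGPSet_of_isClusterSet
    (hG : ∀ u v, u ≠ v → ¬G.Adj u v → ∃ w, G.Adj u w ∧ G.Adj w v)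
    (hS : G.IsClusterSet S) : G.IsGPSet S := by
  intro u v w hu hv hw huv huw hvw p _ hlen hwp
  have hdist : G.dist u v ≤ 2 := by
    by_cases hadj : G.Adj u v
    · exact (dist_le hadj.toWalk).trans (by simp)
    · obtain ⟨x, hux, hxv⟩ := hG u v huv hadj
      exact dist_le (.cons hux (.cons hxv .nil))
  rcases p with _ | ⟨h₁, _ | ⟨h₂, _ | ⟨h₃, q⟩⟩⟩
  · exact huv rfl
  · simp only [Walk.support_cons, Walk.support_nil, List.mem_cons, List.not_mem_nil, or_false]
      at hwp
    rcases hwp with rfl | rfl <;> simp at huw hvw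
  · simp only [Walk.support_cons, Walk.support_nil, List.mem_cons, List.not_mem_nil, or_false]
      at hwp
    rcases hwp with rfl | rfl | rfl
    · simp at huw
    · have := dist_eq_one_iff_adj.2 (hS hu hv hw huv h₁ h₂)
      simp_all
    · simp at hvw
  · simp only [Walk.length_cons] at hlen
    omega

theorem isGPSet_of_neighborSet_subsingleton (hG : ∀ v, (G.neighborSet v).Subsingleton)
    (S : Set V) : G.IsGPSet S := by
  intro u v w _ _ _ _ huw hvw p hp _ hwp
  rcases p with _ | ⟨h₁, _ | ⟨h₂, q⟩⟩
  · simp_all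
  · simp only [Walk.support_cons, Walk.support_nil, List.mem_cons, List.not_mem_nil, or_false]
      at hwp
    rcases hwp with rfl | rfl <;> simp at huw hvw
  · obtain rfl : u = _ := hG _ h₁.symm h₂
    simp [Walk.cons_isPath_iff] at hp

theorem gpNumber_eq {m : ℕ} (hS : G.IsGPSet S) (hcard : S.ncard = m)
    (hle : ∀ T, G.IsGPSet T → T.ncard ≤ m) : G.gpNumber = m :=
  IsGreatest.csSup_eq ⟨⟨S, hS, hcard.symm⟩, by rintro _ ⟨T, hT, rfl⟩; exact hle T hT⟩

end SimpleGraph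

theorem subset_or_disjoint_of_disjoint_trans {α : Type*} [DecidableEq α] {𝒜 : Finset (Finset α)}
    (h𝒜 : (𝒜 : Set (Finset α)).Sized 2)
    (htrans : ∀ A ∈ 𝒜, ∀ B ∈ 𝒜, ∀ C ∈ 𝒜, A ≠ C → Disjoint A B → Disjoint B C → Disjoint A C)
    {A B C : Finset α} (hA : A ∈ 𝒜) (hB : B ∈ 𝒜) (hC : C ∈ 𝒜) (hAB : Disjoint A B) :
    C ⊆ A ∪ B ∨ Disjoint C (A ∪ B) := by
  by_cases hCA : Disjoint C A
  · by_cases hCB : C = B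
    · exact .inl (hCB ▸ subset_union_right)
    · exact .inr (disjoint_union_right.2 ⟨hCA, htrans C hC A hA B hB hCB hCA hAB⟩)
  left
  by_cases hCB : Disjoint C B
  · obtain rfl : C = A := by_contra fun hCA' => hCA (htrans C hC B hB A hA hCA' hCB hAB.symm)
    exact subset_union_left
  obtain ⟨x, hxC, hxA⟩ := not_disjoint_iff.1 hCA
  obtain ⟨y, hyC, hyB⟩ := not_disjoint_iff.1 hCB
  have hxy : x ≠ y := fun h => disjoint_left.1 hAB hxA (h ▸ hyB)
  have hC_eq : {x, y} = C :=
    eq_of_subset_of_card_le (insert_subset hxC (singleton_subset_iff.2 hyC))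
      (by rw [h𝒜 hC, card_pair hxy])
  rw [← hC_eq]
  exact insert_subset (mem_union_left _ hxA) (singleton_subset_iff.2 (mem_union_right _ hyB))

theorem card_le_six_of_disjoint_trans {n : ℕ} (h4 : 4 ≤ n) (h7 : n ≤ 7)
    {𝒜 : Finset (Finset (Fin n))} (h𝒜 : (𝒜 : Set (Finset (Fin n))).Sized 2)
    (htrans : ∀ A ∈ 𝒜, ∀ B ∈ 𝒜, ∀ C ∈ 𝒜, A ≠ C → Disjoint A B → Disjoint B C → Disjoint A C) :
    #𝒜 ≤ 6 := by
  by_cases hI : (𝒜 : Set (Finset (Fin n))).Intersecting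
  · calc #𝒜 ≤ (n - 1).choose (2 - 1) := erdos_ko_rado hI h𝒜 (by omega)
      _ = n - 1 := Nat.choose_one_right _
      _ ≤ 6 := by omega
  obtain ⟨A, hA, B, hB, hAB⟩ : ∃ A ∈ 𝒜, ∃ B ∈ 𝒜, Disjoint A B := by
    simpa [Set.Intersecting] using hI
  have hsplit C (hC : C ∈ 𝒜) := subset_or_disjoint_of_disjoint_trans h𝒜 htrans hA hB hC hAB
  have hcardAB : #(A ∪ B) = 4 := by rw [card_union_of_disjoint hAB, h𝒜 hA, h𝒜 hB]
  by_cases hout : ∃ D ∈ 𝒜, Disjoint D (A ∪ B)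
  · obtain ⟨D, hD, hDAB⟩ := hout
    rw [disjoint_union_right] at hDAB
    have hsub : 𝒜 ⊆ {A, B} ∪ (A ∪ B)ᶜ.powersetCard 2 := by
      intro C hC
      rcases hsplit C hC with hCAB | hCAB
      · refine mem_union_left _ ?_
        by_contra hCne
        simp only [mem_insert, mem_singleton, not_or] at hCne
        have hCD : Disjoint C D := disjoint_of_subset_left hCAB (disjoint_union_right.2 hDAB).symm
        have hCAB' : Disjoint C (A ∪ B) := disjoint_union_right.2
          ⟨htrans C hC D hD A hA hCne.1 hCD hDAB.1, htrans C hC D hD B hB hCne.2 hCD hDAB.2⟩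
        have hC0 := h𝒜 hC
        rw [(disjoint_self_iff_empty _).1 (disjoint_of_subset_right hCAB hCAB')] at hC0
        simp at hC0
      · exact mem_union_right _ (mem_powersetCard.2 ⟨subset_compl_iff_disjoint_right.2 hCAB, h𝒜 hC⟩)
    calc #𝒜 ≤ #({A, B} ∪ (A ∪ B)ᶜ.powersetCard 2) := card_le_card hsub
      _ ≤ #{A, B} + #((A ∪ B)ᶜ.powersetCard 2) := card_union_le _ _
      _ ≤ 2 + (n - 4).choose 2 := by
        rw [card_powersetCard, card_compl, Fintype.card_fin, hcardAB]
        exact Nat.add_le_add_right card_le_two _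
      _ ≤ 6 := by interval_cases n <;> decide
  push Not at hout
  calc #𝒜 ≤ #((A ∪ B).powersetCard 2) :=
        card_le_card fun C hC => mem_powersetCard.2 ⟨(hsplit C hC).resolve_right (hout C hC), h𝒜 hC⟩
    _ = 6 := by rw [card_powersetCard, hcardAB]; rfl

theorem ncard_setOf_subset {α : Type*} (k : ℕ) (T : Finset α) :
    {v : {s : Finset α // s.card = k} | v.1 ⊆ T}.ncard = (#T).choose k := by
  rw [← Set.ncard_image_of_injective _ Subtype.val_injective, ← card_powersetCard,
    ← Set.ncard_coe_finset]
  congr 1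
  ext s
  simp [mem_powersetCard, and_comm]

section Kneser

variable {n k : ℕ}

theorem kneserGraph_adj_iff (hk : 0 < k) {a b : {s : Finset (Fin n) // s.card = k}} :
    (kneserGraph n k).Adj a b ↔ Disjoint a.1 b.1 := by
  refine ⟨And.left, fun h => ⟨h, ?_⟩⟩
  rintro rfl
  rw [disjoint_self_iff_empty] at h
  have := a.2
  rw [h, card_empty] at this
  omega

theorem kneserGraph_neighborSet_subsingleton (h : n ≤ 2 * k)
    (a : {s : Finset (Fin n) // s.card = k}) : ((kneserGraph n k).neighborSet a).Subsingleton := by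
  suffices ∀ b ∈ (kneserGraph n k).neighborSet a, b.1 = a.1ᶜ from
    fun b hb c hc => Subtype.ext ((this b hb).trans (this c hc).symm)
  intro b hb
  refine eq_of_subset_of_card_le (subset_compl_iff_disjoint_left.2 hb.1) ?_
  rw [card_compl, Fintype.card_fin, a.2, b.2]
  omega

theorem kneserGraph_exists_common_adj (h : 3 * k ≤ n + 1)
    {a b : {s : Finset (Fin n) // s.card = k}} (hab : a ≠ b) (hnadj : ¬(kneserGraph n k).Adj a b) :
    ∃ c, (kneserGraph n k).Adj a c ∧ (kneserGraph n k).Adj c b := by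
  have hk : 0 < k := by
    refine Nat.pos_of_ne_zero fun hk => hab (Subtype.ext ?_)
    rw [card_eq_zero.1 (a.2.trans hk), card_eq_zero.1 (b.2.trans hk)]
  rw [kneserGraph_adj_iff hk, not_disjoint_iff_nonempty_inter, ← card_pos] at hnadj
  have hunion := card_union_add_card_inter a.1 b.1
  obtain ⟨c, hc, hck⟩ := exists_subset_card_eq (s := (a.1 ∪ b.1)ᶜ) (n := k) (by
    rw [card_compl, Fintype.card_fin, a.2, b.2] at *
    omega)
  rw [subset_compl_iff_disjoint_left, disjoint_union_left] at hc
  exact ⟨⟨c, hck⟩, (kneserGraph_adj_iff hk).2 hc.1, (kneserGraph_adj_iff hk).2 hc.2.symm⟩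

theorem isClusterSet_kneserGraph_setOf_subset {T : Finset (Fin n)} (hT : #T = 2 * k) :
    (kneserGraph n k).IsClusterSet {v | v.1 ⊆ T} := by
  intro u v w hu hv hw huv huw hwv
  have hcompl (x : {s : Finset (Fin n) // s.card = k}) (hx : x.1 ⊆ T) (hxw : Disjoint x.1 w.1) :
      x.1 = T \ w.1 := by
    have hxwT : x.1 ∪ w.1 = T := eq_of_subset_of_card_le (union_subset hx hw)
      (by rw [card_union_of_disjoint hxw, x.2, w.2, hT]; omega)
    rw [← hxwT, union_sdiff_cancel_right hxw]
  exact absurd (Subtype.ext ((hcompl u hu huw.1).trans (hcompl v hv hwv.1.symm).symm)) huv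

theorem kneserGraph_ncard_le_six_of_isClusterSet (h4 : 4 ≤ n) (h7 : n ≤ 7)
    {S : Set {s : Finset (Fin n) // s.card = 2}} (hS : (kneserGraph n 2).IsClusterSet S) :
    S.ncard ≤ 6 := by
  classical
  rw [Set.ncard_eq_toFinset_card', ← card_map (Function.Embedding.subtype _)]
  refine card_le_six_of_disjoint_trans h4 h7 ?_ ?_
  · intro s hs
    simp only [coe_map, Function.Embedding.coe_subtype, Set.mem_image, mem_coe,
      Set.mem_toFinset] at hs
    obtain ⟨a, -, rfl⟩ := hs
    exact a.2
  · simp only [mem_map, Set.mem_toFinset, Function.Embedding.coe_subtype]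
    rintro _ ⟨a, ha, rfl⟩ _ ⟨b, hb, rfl⟩ _ ⟨c, hc, rfl⟩ hac hab hbc
    rw [← kneserGraph_adj_iff two_pos] at hab hbc ⊢
    exact hS ha hc hb (fun h => hac (h ▸ rfl)) hab hbc

end Kneser

/-- For every integer `n` with `4 ≤ n ≤ 6`, the general position number of the
Kneser graph `K(n,2)` equals `6`. -/
theorem gpNumber_kneserGraph_two_of_le_six (n : ℕ) (h4 : 4 ≤ n) (h6 : n ≤ 6) :
    (kneserGraph n 2).gpNumber = 6 := by
  obtain ⟨T, -, hT⟩ := exists_subset_card_eq (show 4 ≤ #(univ : Finset (Fin n)) by simpa)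
  have hgp : (kneserGraph n 2).IsGPSet {v | v.1 ⊆ T} := by
    rcases h4.eq_or_lt with rfl | h5
    · exact isGPSet_of_neighborSet_subsingleton
        (kneserGraph_neighborSet_subsingleton (by norm_num)) _
    · exact isGPSet_of_isClusterSet
        (fun _ _ => kneserGraph_exists_common_adj (by omega))
        (isClusterSet_kneserGraph_setOf_subset hT)
  exact gpNumber_eq hgp (by rw [ncard_setOf_subset, hT]; rfl)
    fun S hS => kneserGraph_ncard_le_six_of_isClusterSet h4 (by omega) hS.isClusterSet
end

section
/- If G and H are finite connected graphs, then gp(G □ H) ≥ gp(G) + gp(H) − 2. -/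
/-!
Pick maximum general position sets `S ∋ s` of `G` and `T ∋ t` of `H` and take the cross
`(S ∖ {s}) × {t} ∪ {s} × (T ∖ {t})`, of size `|S| + |T| - 2`. Distances in `G □ H` add over the
coordinates, so `w` lies on a geodesic from `u` to `v` iff each coordinate of `w` lies on a
geodesic between the corresponding coordinates of `u` and `v`. General position of `S` and `T`
then makes each coordinate of `w` equal to that of `u` or of `v`, and inside the cross this
already forces `w = u` or `w = v`.
-/

namespace SimpleGraph

variable {V : Type*} {G : SimpleGraph V}

section Betweenness

variable {u v w : V}

lemma Walk.dist_add_dist_eq_of_mem_support [DecidableEq V] (p : G.Walk u v)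
    (hp : p.length = G.dist u v) (hw : w ∈ p.support) :
    G.dist u w + G.dist w v = G.dist u v := by
  have h_take := G.dist_le (p.takeUntil w hw)
  have h_drop := G.dist_le (p.dropUntil w hw)
  have h_split := congrArg Walk.length (p.take_spec hw)
  have h_tri := Reachable.dist_triangle_left ⟨p.takeUntil w hw⟩ v
  rw [Walk.length_append] at h_split
  omega

lemma exists_isPath_length_eq_dist_mem_support (huw : G.Reachable u w) (hwv : G.Reachable w v)
    (h : G.dist u w + G.dist w v = G.dist u v) :
    ∃ p : G.Walk u v, p.IsPath ∧ p.length = G.dist u v ∧ w ∈ p.support := by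
  obtain ⟨p, hp⟩ := huw.exists_walk_length_eq_dist
  obtain ⟨q, hq⟩ := hwv.exists_walk_length_eq_dist
  have hlen : (p.append q).length = G.dist u v := by rw [Walk.length_append, hp, hq, h]
  exact ⟨p.append q, (p.append q).isPath_of_length_eq_dist hlen, hlen,
    Walk.mem_support_append_iff _ _ |>.2 (.inl p.end_mem_support)⟩

end Betweenness

lemma isGPSet_iff_dist (hG : G.Preconnected) {S : Set V} :
    G.IsGPSet S ↔ ∀ ⦃u v w⦄, u ∈ S → v ∈ S → w ∈ S →
      G.dist u w + G.dist w v = G.dist u v → w = u ∨ w = v := by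
  classical
  constructor
  · intro hS u v w hu hv hw h
    by_contra! hne
    by_cases huv : u = v
    · subst huv
      exact hne.1 ((hG u w).dist_eq_zero_iff.1 (by rw [dist_self] at h; omega)).symm
    obtain ⟨p, hp, hlen, hmem⟩ := exists_isPath_length_eq_dist_mem_support (hG u w) (hG w v) h
    exact hS hu hv hw huv (Ne.symm hne.1) (Ne.symm hne.2) p hp hlen hmem
  · intro hS u v w hu hv hw _ huw hvw p _ hlen hmem
    rcases hS hu hv hw (p.dist_add_dist_eq_of_mem_support hlen hmem) with h | h
    exacts [huw h.symm, hvw h.symm]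

section gpNumber

lemma isGPSet_of_subsingleton {S : Set V} (hS : S.Subsingleton) : G.IsGPSet S :=
  fun _ _ _ hu hv _ huv => absurd (hS hu hv) huv

variable [Finite V]

lemma bddAbove_gpNumber_set : BddAbove {n | ∃ S : Set V, G.IsGPSet S ∧ n = S.ncard} :=
  ⟨Nat.card V, by rintro n ⟨S, -, rfl⟩; exact Set.ncard_le_card S⟩

lemma IsGPSet.ncard_le_gpNumber {S : Set V} (hS : G.IsGPSet S) : S.ncard ≤ G.gpNumber :=
  le_csSup bddAbove_gpNumber_set ⟨S, hS, rfl⟩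

lemma one_le_gpNumber [Nonempty V] (G : SimpleGraph V) : 1 ≤ G.gpNumber := by
  have hS : G.IsGPSet {Classical.arbitrary V} :=
    isGPSet_of_subsingleton Set.subsingleton_singleton
  simpa using hS.ncard_le_gpNumber

lemma exists_isGPSet_ncard_eq_gpNumber (G : SimpleGraph V) :
    ∃ S : Set V, G.IsGPSet S ∧ S.ncard = G.gpNumber := by
  obtain ⟨S, hS, h⟩ : G.gpNumber ∈ {n | ∃ S : Set V, G.IsGPSet S ∧ n = S.ncard} :=
    Nat.sSup_mem ⟨0, ∅, isGPSet_of_subsingleton Set.subsingleton_empty, Set.ncard_empty V |>.symm⟩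
      bddAbove_gpNumber_set
  exact ⟨S, hS, h.symm⟩

end gpNumber

section BoxProd

variable {α β : Type*} {G : SimpleGraph α} {H : SimpleGraph β}

lemma Reachable.dist_boxProd {x y : α × β} (h : (G □ H).Reachable x y) :
    (G □ H).dist x y = G.dist x.1 y.1 + H.dist x.2 y.2 := by
  obtain ⟨hG, hH⟩ := reachable_boxProd.1 h
  have := edist_boxProd (G := G) (H := H) x y
  rw [← h.coe_dist_eq_edist, ← hG.coe_dist_eq_edist, ← hH.coe_dist_eq_edist] at this
  exact_mod_cast this

lemma dist_add_dist_eq_of_boxProd (hG : G.Preconnected) (hH : H.Preconnected) {x y z : α × β}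
    (h : (G □ H).dist x z + (G □ H).dist z y = (G □ H).dist x y) :
    G.dist x.1 z.1 + G.dist z.1 y.1 = G.dist x.1 y.1 ∧
      H.dist x.2 z.2 + H.dist z.2 y.2 = H.dist x.2 y.2 := by
  have hGH := hG.boxProd hH
  rw [(hGH x z).dist_boxProd, (hGH z y).dist_boxProd, (hGH x y).dist_boxProd] at h
  have hG_tri := (hG x.1 z.1).dist_triangle_left y.1
  have hH_tri := (hH x.2 z.2).dist_triangle_left y.2
  omega

end BoxProd

end SimpleGraph

section CrossSet

variable {α β : Type*} {S : Set α} {T : Set β} {s : α} {t : β}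

def crossSet (S : Set α) (T : Set β) (s : α) (t : β) : Set (α × β) :=
  (fun a => (a, t)) '' (S \ {s}) ∪ (fun b => (s, b)) '' (T \ {t})

lemma crossSet_subset_prod (hs : s ∈ S) (ht : t ∈ T) : crossSet S T s t ⊆ S ×ˢ T := by
  rintro _ (⟨a, ha, rfl⟩ | ⟨b, hb, rfl⟩)
  exacts [⟨ha.1, ht⟩, ⟨hs, hb.1⟩]

lemma ncard_crossSet (hS : S.Finite) (hT : T.Finite) (hs : s ∈ S) (ht : t ∈ T) :
    (crossSet S T s t).ncard = (S.ncard - 1) + (T.ncard - 1) := by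
  have hdisj : Disjoint ((fun a => (a, t)) '' (S \ {s})) ((fun b => (s, b)) '' (T \ {t})) := by
    rw [Set.disjoint_left]
    rintro _ ⟨a, ha, rfl⟩ ⟨b, -, hb⟩
    exact ha.2 (congrArg Prod.fst hb).symm
  rw [crossSet, Set.ncard_union_eq hdisj (hS.sdiff.image _) (hT.sdiff.image _),
    Set.ncard_image_of_injective _ (Prod.mk_left_injective t),
    Set.ncard_image_of_injective _ (Prod.mk_right_injective s),
    Set.ncard_sdiff_singleton_of_mem hs, Set.ncard_sdiff_singleton_of_mem ht]

lemma eq_or_eq_of_mem_crossSet {u v w : α × β} (hu : u ∈ crossSet S T s t)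
    (hv : v ∈ crossSet S T s t) (hw : w ∈ crossSet S T s t) (h₁ : w.1 = u.1 ∨ w.1 = v.1)
    (h₂ : w.2 = u.2 ∨ w.2 = v.2) : w = u ∨ w = v := by
  rcases hu with ⟨a, ha, rfl⟩ | ⟨b, hb, rfl⟩ <;> rcases hv with ⟨a', ha', rfl⟩ | ⟨b', hb', rfl⟩ <;>
    rcases hw with ⟨a'', ha'', rfl⟩ | ⟨b'', hb'', rfl⟩ <;> simp_all

end CrossSet

namespace SimpleGraph

variable {α β : Type*} {G : SimpleGraph α} {H : SimpleGraph β}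

lemma IsGPSet.boxProd_crossSet (hG : G.Preconnected) (hH : H.Preconnected) {S : Set α}
    {T : Set β} {s : α} {t : β} (hS : G.IsGPSet S) (hT : H.IsGPSet T) (hs : s ∈ S) (ht : t ∈ T) :
    (G □ H).IsGPSet (crossSet S T s t) := by
  rw [isGPSet_iff_dist hG] at hS
  rw [isGPSet_iff_dist hH] at hT
  rw [isGPSet_iff_dist (hG.boxProd hH)]
  intro u v w hu hv hw h
  have hsub := crossSet_subset_prod hs ht
  obtain ⟨hG_btw, hH_btw⟩ := dist_add_dist_eq_of_boxProd hG hH h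
  exact eq_or_eq_of_mem_crossSet hu hv hw
    (hS (hsub hu).1 (hsub hv).1 (hsub hw).1 hG_btw) (hT (hsub hu).2 (hsub hv).2 (hsub hw).2 hH_btw)

end SimpleGraph

/-- If `G` and `H` are finite connected graphs, then
`gp(G □ H) ≥ gp(G) + gp(H) - 2`. -/
theorem gpNumber_boxProd_ge {α β : Type*} [Fintype α] [Fintype β]
    (G : SimpleGraph α) (H : SimpleGraph β) (hG : G.Connected) (hH : H.Connected) :
    G.gpNumber + H.gpNumber - 2 ≤ (G □ H).gpNumber := by
  obtain ⟨S, hS, hS_card⟩ := G.exists_isGPSet_ncard_eq_gpNumber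
  obtain ⟨T, hT, hT_card⟩ := H.exists_isGPSet_ncard_eq_gpNumber
  have : Nonempty α := hG.nonempty
  have : Nonempty β := hH.nonempty
  have hG_pos := G.one_le_gpNumber
  have hH_pos := H.one_le_gpNumber
  obtain ⟨s, hs⟩ : S.Nonempty := Set.nonempty_of_ncard_ne_zero (by omega)
  obtain ⟨t, ht⟩ : T.Nonempty := Set.nonempty_of_ncard_ne_zero (by omega)
  calc G.gpNumber + H.gpNumber - 2 = (crossSet S T s t).ncard := by
        rw [ncard_crossSet S.toFinite T.toFinite hs ht]
        omega
    _ ≤ (G □ H).gpNumber :=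
        (hS.boxProd_crossSet hG.preconnected hH.preconnected hT hs ht).ncard_le_gpNumber
end

section
/- Let k ≥ 2 and n_1, …, n_k ≥ 2 be integers and let G = K_{n_1} □ ⋯ □ K_{n_k} with vertex set the tuples (j_1,…,j_k), j_i ∈ {1,…,n_i}. For i ∈ {1,…,k} let X_i be the set of tuples whose coordinates are all equal to 1 except the i-th coordinate, which is some j ∈ {2,…,n_i}. Then X = X_1 ∪ ⋯ ∪ X_k is a general position set of G of cardinality n_1 + ⋯ + n_k − k. -/
/-- The Cartesian product `K_{n₁} □ ⋯ □ K_{n_k}` of complete graphs (a Hamming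
graph): vertices are tuples `(j₁, …, j_k)` with `j_i ∈ {1, …, n_i}`, two tuples
adjacent iff they differ in exactly one coordinate. -/
def hammingGraph {k : ℕ} (n : Fin k → ℕ) : SimpleGraph (Π i, Fin (n i)) where
  Adj a b := ∃! i, a i ≠ b i
  symm := by
    constructor
    rintro a b ⟨i, hi, hmin⟩
    exact ⟨i, hi.symm, fun j hj => hmin j hj.symm⟩
  loopless := by
    constructor
    rintro a ⟨i, hi, -⟩
    exact hi rfl

/-!
The set `X` is exactly the neighbourhood of the all-first vertex `c`: a neighbour of `c` is
`update c i a` with `a ≠ c i`, and there are `∑ i, (n i - 1)` of them. Two neighbours of `c`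
are adjacent iff they move the same coordinate, so adjacency is transitive on `N(c)`. Any
neighbourhood with this property is in general position: all its vertices are within distance
`2` of each other through `c`, so an inner vertex `w` of a geodesic from `u` to `v` would be
adjacent to both, hence `u` and `v` adjacent, and the geodesic could not pass through `w`.
-/

open Function

namespace SimpleGraph

variable {V : Type*} {G : SimpleGraph V}

theorem Walk.dist_add_dist_le_length [DecidableEq V] {u v w : V} (p : G.Walk u v)
    (hw : w ∈ p.support) :
    G.dist u w + G.dist w v ≤ p.length := by
  have hlen := congrArg Walk.length (p.take_spec hw)
  rw [Walk.length_append] at hlen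
  have := G.dist_le (p.takeUntil w hw)
  have := G.dist_le (p.dropUntil w hw)
  omega

theorem isGPSet_neighborSet {c : V}
    (htrans : ∀ ⦃u w v⦄, G.Adj c u → G.Adj c w → G.Adj c v →
      G.Adj u w → G.Adj w v → u ≠ v → G.Adj u v) :
    G.IsGPSet (G.neighborSet c) := by
  classical
  intro u v w hu hv hw huv huw hvw p _ hp hwp
  have hsum := p.dist_add_dist_le_length hwp
  have hdist : G.dist u v ≤ 2 := G.dist_le (.cons hu.symm (.cons hv .nil))
  have hpos_uw := (hu.symm.reachable.trans hw.reachable).pos_dist_of_ne huw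
  have hpos_wv := (hw.symm.reachable.trans hv.reachable).pos_dist_of_ne hvw.symm
  have hadj_uw : G.Adj u w := dist_eq_one_iff_adj.mp (by omega)
  have hadj_wv : G.Adj w v := dist_eq_one_iff_adj.mp (by omega)
  have hdist_one := dist_eq_one_iff_adj.mpr (htrans hu hw hv hadj_uw hadj_wv huv)
  omega

end SimpleGraph

namespace hammingGraph

variable {k : ℕ} {n : Fin k → ℕ}

theorem adj_iff_exists {c v : Π i, Fin (n i)} :
    (hammingGraph n).Adj c v ↔ ∃ i, v i ≠ c i ∧ ∀ j ≠ i, v j = c j := by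
  refine ⟨fun ⟨i, hi, huniq⟩ => ⟨i, Ne.symm hi, fun j hj => ?_⟩,
    fun ⟨i, hi, hrest⟩ => ⟨i, Ne.symm hi, fun j hj => ?_⟩⟩
  · by_contra h
    exact hj (huniq j (Ne.symm h))
  · by_contra h
    exact hj (hrest j h).symm

theorem exists_update_of_adj {c v : Π i, Fin (n i)} (h : (hammingGraph n).Adj c v) :
    ∃ i, ∃ a ≠ c i, v = update c i a :=
  let ⟨i, hi, hrest⟩ := adj_iff_exists.mp h
  ⟨i, v i, hi, eq_update_iff.mpr ⟨rfl, hrest⟩⟩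

theorem adj_update_update_iff {c : Π i, Fin (n i)} {i : Fin k} {a b : Fin (n i)} :
    (hammingGraph n).Adj (update c i a) (update c i b) ↔ a ≠ b := by
  refine ⟨?_, fun hab => ⟨i, by simpa using hab, fun j hj => ?_⟩⟩
  · rintro h rfl
    exact h.ne rfl
  · by_contra hji
    simp [update_of_ne hji] at hj

theorem eq_of_adj_update_update {c : Π i, Fin (n i)} {i l : Fin k} {a : Fin (n i)}
    {b : Fin (n l)} (ha : a ≠ c i) (hb : b ≠ c l)
    (h : (hammingGraph n).Adj (update c i a) (update c l b)) : i = l := by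
  by_contra hil
  obtain ⟨m, -, huniq⟩ := h
  have him : i = m := huniq i (by simpa [update_of_ne hil] using ha)
  have hlm : l = m := huniq l (by simpa [update_of_ne (Ne.symm hil)] using hb.symm)
  exact hil (him.trans hlm.symm)

theorem adj_trans_of_common_neighbor {c u w v : Π i, Fin (n i)}
    (hu : (hammingGraph n).Adj c u) (hw : (hammingGraph n).Adj c w)
    (hv : (hammingGraph n).Adj c v) (huw : (hammingGraph n).Adj u w)
    (hwv : (hammingGraph n).Adj w v) (huv : u ≠ v) : (hammingGraph n).Adj u v := by
  obtain ⟨i, a, ha, rfl⟩ := exists_update_of_adj hu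
  obtain ⟨l, b, hb, rfl⟩ := exists_update_of_adj hw
  obtain ⟨m, d, hd, rfl⟩ := exists_update_of_adj hv
  obtain rfl := eq_of_adj_update_update ha hb huw
  obtain rfl := eq_of_adj_update_update hb hd hwv
  exact adj_update_update_iff.mpr fun had => huv (had ▸ rfl)

theorem neighborSet_eq_range (c : Π i, Fin (n i)) :
    (hammingGraph n).neighborSet c =
      Set.range fun x : Σ i, {a : Fin (n i) // a ≠ c i} => update c x.1 x.2 := by
  ext v
  simp [adj_iff_exists, eq_update_iff, eq_comm]

theorem ncard_neighborSet (c : Π i, Fin (n i)) :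
    ((hammingGraph n).neighborSet c).ncard = ∑ i, (n i - 1) := by
  rw [neighborSet_eq_range, Set.ncard_range_of_injective, Nat.card_sigma]
  · simp
  rintro ⟨i, a, ha⟩ ⟨l, b, hb⟩ h
  obtain rfl : i = l := by
    by_contra hil
    exact ha (by simpa [update_of_ne hil] using congrFun h i)
  simpa using congrFun h i

end hammingGraph

theorem isGPSet_hammingGraph_general {k : ℕ} (n : Fin k → ℕ)
    (hn : ∀ i, 2 ≤ n i)
    (X : Set (Π i, Fin (n i)))
    (hX : X = ⋃ i : Fin k,
      {v : Π i, Fin (n i) | (v i : ℕ) ≠ 0 ∧ ∀ j, j ≠ i → (v j : ℕ) = 0}) :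
    (hammingGraph n).IsGPSet X ∧ X.ncard = (∑ i, n i) - k := by
  let c : Π i, Fin (n i) := fun i => ⟨0, by have := hn i; omega⟩
  have hXc : X = (hammingGraph n).neighborSet c := by
    ext v
    simp [hX, hammingGraph.adj_iff_exists, c, Fin.ext_iff]
  subst hXc
  refine ⟨SimpleGraph.isGPSet_neighborSet
    fun _ _ _ => hammingGraph.adj_trans_of_common_neighbor, ?_⟩
  have hpos : ∀ i ∈ Finset.univ, 1 ≤ n i := fun i _ => by have := hn i; omega
  rw [hammingGraph.ncard_neighborSet, Finset.sum_tsub_distrib _ hpos]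
  simp

/-- Let `k ≥ 2`, `n₁, …, n_k ≥ 2` and `G = K_{n₁} □ ⋯ □ K_{n_k}`. For each `i`
let `X_i` consist of the tuples whose coordinates are all the first element
except the `i`-th one; then `X = X_1 ∪ ⋯ ∪ X_k` is a general position set of
`G` of cardinality `n₁ + ⋯ + n_k - k`. -/
theorem isGPSet_hammingGraph {k : ℕ} (hk : 2 ≤ k) (n : Fin k → ℕ)
    (hn : ∀ i, 2 ≤ n i)
    (X : Set (Π i, Fin (n i)))
    (hX : X = ⋃ i : Fin k,
      {v : Π i, Fin (n i) | (v i : ℕ) ≠ 0 ∧ ∀ j, j ≠ i → (v j : ℕ) = 0}) :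
    (hammingGraph n).IsGPSet X ∧ X.ncard = (∑ i, n i) - k :=
  isGPSet_hammingGraph_general n hn X hX
end

section
/- Let n ≥ 6 be an integer and let S be a general position set of the Kneser graph K(n,2) such that the subgraph of K(n,2) induced by S has a connected component with at least 3 vertices. Then |S| ≤ ⌊n/2⌋. -/
/-! If `u, x, w ∈ S` with `u ~ x ~ w` but `u ≁ w`, then `u x w` is a geodesic through a third
vertex of `S`. So along a path of `G[S]` adjacency in `G` propagates, and every component of
`G[S]` is a clique of `G`: in `K(n,2)`, a family of pairwise disjoint pairs. A vertex of `S`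
outside a component with at least three vertices is adjacent to none of them, i.e. meets three
pairwise disjoint pairs, which a pair cannot do. Hence `S` itself consists of pairwise disjoint
pairs and `2|S| ≤ n`. -/

namespace SimpleGraph

variable {V : Type*} {G : SimpleGraph V} {S : Set V}

lemma IsGPSet.adj_of_adj_of_adj (hS : G.IsGPSet S) {u v w : V} (hu : u ∈ S) (hv : v ∈ S)
    (hw : w ∈ S) (huv : u ≠ v) (huw : G.Adj u w) (hwv : G.Adj w v) : G.Adj u v := by
  by_contra hnadj
  let p : G.Walk u v := .cons huw (.cons hwv .nil)
  have hp : p.IsPath := by simp [p, Walk.isPath_def, huw.ne, hwv.ne, huv]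
  have hdist : G.dist u v = 2 := by
    have h0 : G.dist u v ≠ 0 := (Reachable.pos_dist_of_ne p.reachable huv).ne'
    have h1 : G.dist u v ≠ 1 := dist_eq_one_iff_adj.not.mpr hnadj
    have h2 : G.dist u v ≤ 2 := dist_le p
    omega
  exact hS hu hv hw huv huw.ne hwv.ne.symm p hp (by simp [p, hdist]) (by simp [p])

lemma IsGPSet.adj_of_reachable_induce (hS : G.IsGPSet S) {u v : S}
    (h : (G.induce S).Reachable u v) (huv : u ≠ v) : G.Adj u v := by
  obtain ⟨p⟩ := h
  induction p with
  | nil => exact absurd rfl huv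
  | @cons u w v huw p ih =>
    by_cases hwv : w = v
    · exact hwv ▸ huw
    · exact hS.adj_of_adj_of_adj u.2 v.2 w.2 (Subtype.coe_ne_coe.mpr huv) huw (ih hwv)

lemma IsGPSet.isClique_image_supp (hS : G.IsGPSet S) (c : (G.induce S).ConnectedComponent) :
    G.IsClique (Subtype.val '' c.supp) := by
  rintro _ ⟨u, hu, rfl⟩ _ ⟨v, hv, rfl⟩ huv
  exact hS.adj_of_reachable_induce (c.reachable_of_mem_supp hu hv) (ne_of_apply_ne _ huv)

lemma ConnectedComponent.mem_image_supp_induce_of_adj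
    (c : (G.induce S).ConnectedComponent) {x y : V} (hx : x ∈ S)
    (hy : y ∈ Subtype.val '' c.supp) (hxy : G.Adj x y) : x ∈ Subtype.val '' c.supp := by
  obtain ⟨y, hy, rfl⟩ := hy
  exact ⟨⟨x, hx⟩, c.mem_supp_of_adj_mem_supp hy (G := G.induce S) hxy.symm, rfl⟩

end SimpleGraph

namespace Finset

variable {ι α : Type*} {s : Finset ι} {f : ι → Finset α}

lemma card_le_card_of_forall_not_disjoint (hf : (s : Set ι).PairwiseDisjoint f) {x : Finset α}
    (hx : ∀ i ∈ s, ¬Disjoint x (f i)) : #s ≤ #x := by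
  choose g hgx hgf using fun i hi => not_disjoint_iff.mp (hx i hi)
  rw [← card_attach]
  refine card_le_card_of_injOn (fun i => g i i.2) (fun i _ => hgx i i.2) ?_
  rintro ⟨i, hi⟩ - ⟨j, hj⟩ - (hij : g i hi = g j hj)
  by_contra hne
  exact not_disjoint_iff.mpr ⟨g i hi, hgf i hi, hij ▸ hgf j hj⟩
    (hf hi hj fun h => hne (Subtype.ext h))

lemma mul_card_le_card_of_pairwiseDisjoint [Fintype α] [DecidableEq α]
    (hf : (s : Set ι).PairwiseDisjoint f) {k : ℕ} (hk : ∀ i ∈ s, #(f i) = k) :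
    k * #s ≤ Fintype.card α := by
  calc k * #s = #(s.biUnion f) := by
        rw [card_biUnion hf, sum_congr rfl hk, sum_const, smul_eq_mul, mul_comm]
    _ ≤ Fintype.card α := card_le_univ _

end Finset

namespace kneserGraph

variable {n k : ℕ} {C : Set {s : Finset (Fin n) // s.card = k}}

lemma pairwiseDisjoint_of_isClique (hC : (kneserGraph n k).IsClique C) :
    C.PairwiseDisjoint Subtype.val :=
  fun _ ha _ hb hab => (hC ha hb hab).1

lemma mul_ncard_le_of_isClique (hC : (kneserGraph n k).IsClique C) : k * C.ncard ≤ n := by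
  classical
  rw [Set.ncard_eq_toFinset_card']
  simpa using Finset.mul_card_le_card_of_pairwiseDisjoint (s := C.toFinset) (f := Subtype.val)
    (by simpa using pairwiseDisjoint_of_isClique hC) fun v _ => v.2

lemma ncard_le_of_isClique_of_forall_not_adj (hC : (kneserGraph n k).IsClique C)
    {x : {s : Finset (Fin n) // s.card = k}} (hxC : x ∉ C)
    (hx : ∀ y ∈ C, ¬(kneserGraph n k).Adj x y) : C.ncard ≤ k := by
  classical
  rw [Set.ncard_eq_toFinset_card']
  refine (Finset.card_le_card_of_forall_not_disjoint (s := C.toFinset) (f := Subtype.val)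
    (by simpa using pairwiseDisjoint_of_isClique hC) fun y hy hxy => ?_).trans_eq x.2
  rw [Set.mem_toFinset] at hy
  exact hx y hy ⟨hxy, ne_of_mem_of_not_mem hy hxC |>.symm⟩

end kneserGraph

theorem gpSet_kneser_two_component_ge_three_general (n : ℕ)
    (S : Set {s : Finset (Fin n) // s.card = 2})
    (hS : (kneserGraph n 2).IsGPSet S)
    (hc : ∃ c : ((kneserGraph n 2).induce S).ConnectedComponent,
      3 ≤ c.supp.ncard) :
    S.ncard ≤ n / 2 := by
  obtain ⟨c, hc3⟩ := hc
  set C := Subtype.val '' c.supp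
  have hC : (kneserGraph n 2).IsClique C := hS.isClique_image_supp c
  have hCcard : C.ncard = c.supp.ncard := Set.ncard_image_of_injective _ Subtype.val_injective
  have hSC : S ⊆ C := by
    intro x hx
    by_contra hxC
    have hCle := kneserGraph.ncard_le_of_isClique_of_forall_not_adj hC hxC
      fun y hy hxy => hxC (c.mem_image_supp_induce_of_adj hx hy hxy)
    omega
  have hSle := kneserGraph.mul_ncard_le_of_isClique (hC.subset hSC)
  omega

/-- Let `n ≥ 6` and let `S` be a general position set of `K(n,2)` such that the
subgraph induced by `S` has a connected component with at least `3` vertices.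
Then `|S| ≤ ⌊n/2⌋`. -/
theorem gpSet_kneser_two_component_ge_three (n : ℕ) (hn : 6 ≤ n)
    (S : Set {s : Finset (Fin n) // s.card = 2})
    (hS : (kneserGraph n 2).IsGPSet S)
    (hc : ∃ c : ((kneserGraph n 2).induce S).ConnectedComponent,
      3 ≤ c.supp.ncard) :
    S.ncard ≤ n / 2 :=
  gpSet_kneser_two_component_ge_three_general n S hS hc
end

section
/- Let n ≥ 6 be an integer and let S be a general position set of the Kneser graph K(n,2) such that the subgraph of K(n,2) induced by S has a connected component with exactly 2 vertices (a component isomorphic to K_2). Then |S| ≤ 6. -/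
/-! The two vertices `a`, `b` of the `K₂` component are disjoint pairs. Every other vertex of `S`
lies in another component, so it is adjacent to neither, i.e. it meets both `a` and `b`; being a
pair, it is then one of the `C(4,2) = 6` pairs inside `a ∪ b`. -/

open Finset

lemma Finset.subset_union_of_card_eq_two {α : Type*} [DecidableEq α] {s t u : Finset α}
    (hst : Disjoint s t) (hu : u.card = 2) (hus : ¬Disjoint u s) (hut : ¬Disjoint u t) :
    u ⊆ s ∪ t := by
  obtain ⟨x, y, hxy, rfl⟩ := card_eq_two.1 hu
  simp only [disjoint_insert_left, disjoint_singleton_left, not_and_or, not_not] at hus hut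
  have hst' := disjoint_left.1 hst
  grind [insert_subset_iff]

namespace SimpleGraph.ConnectedComponent

variable {V : Type*} {G : SimpleGraph V}

lemma adj_of_supp_eq_pair {c : G.ConnectedComponent} {a b : V} (hab : a ≠ b)
    (hc : c.supp = {a, b}) : G.Adj a b := by
  have ha : a ∈ c.supp := by simp [hc]
  obtain ⟨p⟩ := c.reachable_of_mem_supp ha (show b ∈ c.supp by simp [hc])
  cases p with
  | nil => exact absurd rfl hab
  | @cons _ x _ hax _ =>
    have hx : x ∈ c.supp := c.mem_supp_of_adj_mem_supp ha hax
    rw [hc] at hx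
    rcases hx with rfl | rfl
    · exact absurd hax (G.irrefl)
    · exact hax

end SimpleGraph.ConnectedComponent

namespace kneserGraph

variable {n : ℕ}

lemma val_subset_union_of_not_adj {a b c : {s : Finset (Fin n) // s.card = 2}}
    (hab : (kneserGraph n 2).Adj a b) (hca : ¬(kneserGraph n 2).Adj c a)
    (hcb : ¬(kneserGraph n 2).Adj c b) : c.1 ⊆ a.1 ∪ b.1 := by
  by_cases hca' : c = a
  · subst c; exact subset_union_left
  by_cases hcb' : c = b
  · subst c; exact subset_union_right
  exact subset_union_of_card_eq_two hab.1 c.2 (fun h => hca ⟨h, hca'⟩) (fun h => hcb ⟨h, hcb'⟩)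

end kneserGraph

lemma ncard_le_choose_of_forall_val_subset {α : Type*} {k : ℕ}
    {S : Set {s : Finset α // s.card = k}} {u : Finset α} (hS : ∀ C ∈ S, C.1 ⊆ u) : S.ncard ≤ u.card.choose k := by
  rw [← card_powersetCard, ← Set.ncard_coe_finset]
  exact Set.ncard_le_ncard_of_injOn Subtype.val (fun C hC => by simpa using ⟨hS C hC, C.2⟩)
    Subtype.val_injective.injOn

theorem gpSet_kneser_two_component_eq_two_general (n : ℕ)
    (S : Set {s : Finset (Fin n) // s.card = 2})
    (hc : ∃ c : ((kneserGraph n 2).induce S).ConnectedComponent,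
      c.supp.ncard = 2) :
    S.ncard ≤ 6 := by
  obtain ⟨c, hc⟩ := hc
  obtain ⟨⟨a, ha⟩, ⟨b, hb⟩, hab, hsupp⟩ := Set.ncard_eq_two.1 hc
  have hadj : (kneserGraph n 2).Adj a b := c.adj_of_supp_eq_pair hab hsupp
  have hsub : ∀ C ∈ S, C.1 ⊆ a.1 ∪ b.1 := by
    intro C hC
    by_cases hCc : ⟨C, hC⟩ ∈ c.supp
    · rw [hsupp] at hCc
      rcases hCc with h | h <;> cases h
      exacts [subset_union_left, subset_union_right]
    have hnot : ∀ D (hD : D ∈ S), ⟨D, hD⟩ ∈ c.supp → ¬(kneserGraph n 2).Adj C D :=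
      fun D hD hDc h => hCc (c.mem_supp_of_adj_mem_supp hDc (v := ⟨C, hC⟩) h.symm)
    exact kneserGraph.val_subset_union_of_not_adj hadj (hnot a ha (by simp [hsupp]))
      (hnot b hb (by simp [hsupp]))
  calc S.ncard ≤ (a.1 ∪ b.1).card.choose 2 := ncard_le_choose_of_forall_val_subset hsub
    _ = 6 := by rw [card_union_of_disjoint hadj.1, a.2, b.2]; rfl

/-- Let `n ≥ 6` and let `S` be a general position set of `K(n,2)` such that the
subgraph induced by `S` has a connected component with exactly `2` vertices
(a component isomorphic to `K₂`). Then `|S| ≤ 6`. -/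
theorem gpSet_kneser_two_component_eq_two (n : ℕ) (hn : 6 ≤ n)
    (S : Set {s : Finset (Fin n) // s.card = 2})
    (hS : (kneserGraph n 2).IsGPSet S)
    (hc : ∃ c : ((kneserGraph n 2).induce S).ConnectedComponent,
      c.supp.ncard = 2) :
    S.ncard ≤ 6 :=
  gpSet_kneser_two_component_eq_two_general n S hc
end
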